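/- Let A be a symmetric positive definite real 3×3 matrix, u ∈ ℝ³ a unit vector, γ > 0. Let R : ℝ → ℝ^{3×3}, θ : ℝ → ℝ, t₀ ∈ ℝ, ω ∈ ℝ³, v ∈ ℝ, and suppose R has derivative R(t₀)·ω^× at t₀ and θ has derivative v at t₀. Write R₀ := R(t₀), θ₀ := θ(t₀). Then the map t ↦ U(R(t),θ(t)) has derivative 2 ωᵀ Ra(θ₀,u) ψ(A·T(R₀,θ₀)) + v·(γθ₀ + 2 uᵀ ψ(A·T(R₀,θ₀))) at t₀. -/

import Mathlib

open Matrix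

noncomputable section

abbrev M3 : Type := Matrix (Fin 3) (Fin 3) ℝ
abbrev V3 : Type := Fin 3 → ℝ

/-- skew-symmetric matrix associated to `x`: `skew x *ᵥ y = x ×₃ y`. -/
def skew (x : V3) : M3 :=
  !![0, -x 2, x 1; x 2, 0, -x 0; -x 1, x 0, 0]

/-- the special orthogonal group SO(3) as a subset of 3×3 matrices -/
def SO3 : Set M3 := {R | Rᵀ * R = 1 ∧ R.det = 1}

/-- Rodrigues formula -/
def Ra (θ : ℝ) (u : V3) : M3 :=
  1 + Real.sin θ • skew u + (1 - Real.cos θ) • (skew u * skew u)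

/-- `psi M = vec (P_a M)`, the vector part of the antisymmetric projection -/
def psi (M : M3) : V3 :=
  ![(M 2 1 - M 1 2) / 2, (M 0 2 - M 2 0) / 2, (M 1 0 - M 0 1) / 2]

/-- the angular-warping transformation `T(R,θ) = R · Ra(θ,u)` -/
def Tmap (u : V3) (R : M3) (θ : ℝ) : M3 := R * Ra θ u

/-- the potential function `U(R,θ)` on SO(3) × ℝ -/
def Ufun (A : M3) (u : V3) (γ : ℝ) (R : M3) (θ : ℝ) : ℝ :=
  (A * (1 - Tmap u R θ)).trace + γ / 2 * θ ^ 2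

/-- Euclidean norm on ℝ³ -/
def enorm3 (x : V3) : ℝ := Real.sqrt (x ⬝ᵥ x)

/-- Frobenius norm of a 3×3 matrix -/
def fnorm (M : M3) : ℝ := Real.sqrt ((Mᵀ * M).trace)

/-- `E(M) := (tr(M) I − Mᵀ)/2` -/
def Emap (M : M3) : M3 := (2⁻¹ : ℝ) • (M.trace • (1 : M3) - Mᵀ)

/-- `D_R(R,θ)` from Lemma 2 -/
def DR (A : M3) (u : V3) (R : M3) (θ : ℝ) : M3 :=
  Ra θ u * Emap (A * Tmap u R θ) * (Ra θ u)ᵀ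

/-- `D_θ(R,θ)` from Lemma 2 -/
def Dθ (A : M3) (u : V3) (R : M3) (θ : ℝ) : V3 :=
  (Ra θ u * Emap (A * Tmap u R θ)) *ᵥ u - skew (Ra θ u *ᵥ psi (A * Tmap u R θ)) *ᵥ u

/-- Δ(v,u) from the construction of the synergistic gap -/
def Delta (A : M3) (v u : V3) : ℝ :=
  u ⬝ᵥ ((A.trace • (1 : M3) - A - (2 * (v ⬝ᵥ A *ᵥ v)) • ((1 : M3) - vecMulVec v v)) *ᵥ u)

/-- `v` is a unit eigenvector of `A` -/
def IsUnitEigen (A : M3) (v : V3) : Prop :=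
  v ⬝ᵥ v = 1 ∧ ∃ lam : ℝ, A *ᵥ v = lam • v

/-- Ā := (tr(A) I − A)/2 -/
def Abar (A : M3) : M3 := (2⁻¹ : ℝ) • (A.trace • (1 : M3) - A)

/-- `lam` is an eigenvalue of `M` -/
def IsEigen (M : M3) (lam : ℝ) : Prop := ∃ w : V3, w ≠ 0 ∧ M *ᵥ w = lam • w
attribute [local instance] Matrix.normedAddCommGroup Matrix.normedSpace

/-
The Rodrigues matrices `Ra θ u` (for a unit vector `u`) form a one-parameter subgroup of SO(3)
with generator `u^×`. Since `Qᵀ x^× Q = (Qᵀ x)^×` for `Q ∈ SO(3)`, the product rule gives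
`T' = T · Ω^×` with body angular velocity `Ω = Ra(θ,u)ᵀ ω + θ' u`. Hence
`U' = -tr(A T Ω^×) + γ θ θ'`, and `tr(M x^×) = -2 x · ψ(M)` turns this into the stated formula.
-/

section MatrixCalculus

variable {𝕜 : Type*} [NontriviallyNormedField 𝕜] {l m n : Type*} [Fintype m]
  [Fintype n] {x : 𝕜}

theorem HasDerivAt.matrix_mul {M : 𝕜 → Matrix l m 𝕜} {N : 𝕜 → Matrix m n 𝕜}
    {M' : Matrix l m 𝕜} {N' : Matrix m n 𝕜} (hM : HasDerivAt M M' x) (hN : HasDerivAt N N' x) :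
    HasDerivAt (fun t => M t * N t) (M' * N x + M x * N') x := by
  refine hasDerivAt_pi.mpr fun i => hasDerivAt_pi.mpr fun j => ?_
  simp only [mul_apply, Matrix.add_apply, ← Finset.sum_add_distrib]
  exact HasDerivAt.fun_sum fun k _ => (hasDerivAt_pi.mp (hasDerivAt_pi.mp hM i) k).fun_mul
    (hasDerivAt_pi.mp (hasDerivAt_pi.mp hN k) j)

theorem HasDerivAt.matrix_trace {M : 𝕜 → Matrix m m 𝕜} {M' : Matrix m m 𝕜}
    (hM : HasDerivAt M M' x) : HasDerivAt (fun t => (M t).trace) M'.trace x :=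
  HasDerivAt.fun_sum fun i _ => hasDerivAt_pi.mp (hasDerivAt_pi.mp hM i) i

end MatrixCalculus

section Skew

theorem skew_add (x y : V3) : skew (x + y) = skew x + skew y := by
  ext i j; fin_cases i <;> fin_cases j <;> simp [skew] <;> ring

theorem skew_smul (c : ℝ) (x : V3) : skew (c • x) = c • skew x := by
  ext i j; fin_cases i <;> fin_cases j <;> simp [skew]

theorem skew_transpose (x : V3) : (skew x)ᵀ = -skew x := by
  ext i j; fin_cases i <;> fin_cases j <;> simp [skew]

theorem skew_mul_skew_mul_skew (x : V3) :
    skew x * skew x * skew x = -((x ⬝ᵥ x) • skew x) := by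
  ext i j
  fin_cases i <;> fin_cases j <;>
    simp [skew, mul_apply, Fin.sum_univ_three, dotProduct] <;> ring

theorem trace_mul_skew (M : M3) (x : V3) : (M * skew x).trace = -2 * (x ⬝ᵥ psi M) := by
  simp only [trace, skew, diag_apply, mul_apply, of_apply, cons_val', cons_val_fin_one,
    Fin.sum_univ_three, cons_val_zero, cons_val_one, cons_val, dotProduct, psi]
  ring

theorem transpose_mul_skew_mul (M : M3) (x : V3) :
    Mᵀ * skew x * M = skew (adjugate M *ᵥ x) := by
  ext i j
  fin_cases i <;> fin_cases j <;>
    simp [skew, adjugate_fin_three, mul_apply, mulVec, dotProduct, Fin.sum_univ_three] <;> ring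

end Skew

theorem adjugate_eq_transpose_of_mem_SO3 {R : M3} (hR : R ∈ SO3) : adjugate R = Rᵀ := by
  calc adjugate R = Rᵀ * R * adjugate R := by rw [hR.1, one_mul]
    _ = Rᵀ := by rw [mul_assoc, mul_adjugate, hR.2, one_smul, mul_one]

theorem transpose_mul_skew_mul_of_mem_SO3 {R : M3} (hR : R ∈ SO3) (x : V3) :
    Rᵀ * skew x * R = skew (Rᵀ *ᵥ x) := by
  rw [transpose_mul_skew_mul, adjugate_eq_transpose_of_mem_SO3 hR]

section Rodrigues

variable {u : V3}

theorem Ra_zero : Ra 0 u = 1 := by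
  simp [Ra]

theorem Ra_transpose (θ : ℝ) : (Ra θ u)ᵀ = Ra (-θ) u := by
  simp [Ra, transpose_add, transpose_smul, transpose_mul, skew_transpose]

theorem Ra_add (hu : u ⬝ᵥ u = 1) (a b : ℝ) : Ra (a + b) u = Ra a u * Ra b u := by
  have hK3 : skew u * skew u * skew u = -skew u := by
    rw [skew_mul_skew_mul_skew, hu, one_smul]
  simp only [Ra, Real.sin_add, Real.cos_add, add_mul, mul_add, one_mul, mul_one,
    smul_mul_assoc, mul_smul_comm, ← mul_assoc, hK3, neg_mul]
  module

theorem Ra_mem_SO3 (hu : u ⬝ᵥ u = 1) (θ : ℝ) : Ra θ u ∈ SO3 := by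
  have hinv : ∀ φ, (Ra φ u)ᵀ * Ra φ u = 1 := fun φ => by
    rw [Ra_transpose, ← Ra_add hu, neg_add_cancel, Ra_zero]
  refine ⟨hinv θ, ?_⟩
  -- `det (Ra θ u)` is the square of `det (Ra (θ / 2) u)`, whose square is `1`.
  have hdet : (Ra (θ / 2) u).det * (Ra (θ / 2) u).det = 1 := by
    simpa using congrArg det (hinv (θ / 2))
  rw [← add_halves θ, Ra_add hu, det_mul, hdet]

theorem hasDerivAt_Ra (hu : u ⬝ᵥ u = 1) (θ : ℝ) :
    HasDerivAt (fun φ => Ra φ u) (Ra θ u * skew u) θ := by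
  have h : HasDerivAt (fun φ => Ra φ u)
      (0 + Real.cos θ • skew u + (0 - -Real.sin θ) • (skew u * skew u)) θ :=
    ((hasDerivAt_const θ (1 : M3)).fun_add ((Real.hasDerivAt_sin θ).smul_const (skew u))).fun_add
      (((hasDerivAt_const θ (1 : ℝ)).fun_sub (Real.hasDerivAt_cos θ)).smul_const (skew u * skew u))
  refine h.congr_deriv ?_
  simp only [Ra, add_mul, one_mul, smul_mul_assoc, skew_mul_skew_mul_skew, hu, one_smul]
  module

end Rodrigues

theorem hasDerivAt_Tmap {u : V3} (hu : u ⬝ᵥ u = 1) {R : ℝ → M3} {θ : ℝ → ℝ} {t₀ : ℝ} {ω : V3}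
    {v : ℝ} (hR : HasDerivAt R (R t₀ * skew ω) t₀) (hθ : HasDerivAt θ v t₀) :
    HasDerivAt (fun t => Tmap u (R t) (θ t))
      (Tmap u (R t₀) (θ t₀) * skew ((Ra (θ t₀) u)ᵀ *ᵥ ω + v • u)) t₀ := by
  refine (hR.matrix_mul ((hasDerivAt_Ra hu (θ t₀)).scomp t₀ hθ)).congr_deriv ?_
  have hSO3 := Ra_mem_SO3 hu (θ t₀)
  have hRRt : Ra (θ t₀) u * (Ra (θ t₀) u)ᵀ = 1 := mul_eq_one_comm.mp hSO3.1
  have hcancel : R t₀ * Ra (θ t₀) u * ((Ra (θ t₀) u)ᵀ * skew ω * Ra (θ t₀) u)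
      = R t₀ * skew ω * Ra (θ t₀) u := by
    rw [← mul_assoc, ← mul_assoc, mul_assoc (R t₀), hRRt, mul_one]
  rw [skew_add, skew_smul, ← transpose_mul_skew_mul_of_mem_SO3 hSO3, Tmap, mul_add, hcancel]
  simp only [Function.comp_apply, mul_assoc, mul_smul_comm]

theorem deriv_of_U_general
    (A : M3) (u : V3) (hu : u ⬝ᵥ u = 1) (γ : ℝ)
    (R : ℝ → M3) (θ : ℝ → ℝ) (t₀ : ℝ) (ω : V3) (v : ℝ)
    (hR : HasDerivAt R (R t₀ * skew ω) t₀) (hθ : HasDerivAt θ v t₀) :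
    HasDerivAt (fun t => Ufun A u γ (R t) (θ t))
      (2 * (ω ⬝ᵥ (Ra (θ t₀) u *ᵥ psi (A * Tmap u (R t₀) (θ t₀)))) +
        v * (γ * θ t₀ + 2 * (u ⬝ᵥ psi (A * Tmap u (R t₀) (θ t₀))))) t₀ := by
  have hU := (((hasDerivAt_const t₀ A).matrix_mul ((hasDerivAt_const t₀ (1 : M3)).fun_sub
    (hasDerivAt_Tmap hu hR hθ))).matrix_trace).fun_add ((hθ.pow 2).const_mul (γ / 2))
  refine hU.congr_deriv ?_
  rw [zero_mul, zero_add, zero_sub, mul_neg, trace_neg, ← mul_assoc, trace_mul_skew,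
    add_dotProduct, smul_dotProduct, mulVec_transpose, ← dotProduct_mulVec]
  ring

theorem deriv_of_U
    (A : M3) (hA : A.PosDef) (u : V3) (hu : u ⬝ᵥ u = 1) (γ : ℝ) (hγ : 0 < γ)
    (R : ℝ → M3) (θ : ℝ → ℝ) (t₀ : ℝ) (ω : V3) (v : ℝ)
    (hR : HasDerivAt R (R t₀ * skew ω) t₀) (hθ : HasDerivAt θ v t₀) :
    HasDerivAt (fun t => Ufun A u γ (R t) (θ t))
      (2 * (ω ⬝ᵥ (Ra (θ t₀) u *ᵥ psi (A * Tmap u (R t₀) (θ t₀)))) +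
        v * (γ * θ t₀ + 2 * (u ⬝ᵥ psi (A * Tmap u (R t₀) (θ t₀))))) t₀ :=
  deriv_of_U_general A u hu γ R θ t₀ ω v hR hθ
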